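/- Let f be a loopless (k,n)-bounded affine permutation and let f^∨ be its dual, defined by f^∨(p) := f^{-1}(p) + n. Let θ̃ : ℤ → ℝ satisfy θ̃_{p+n} = θ̃_p + π for all p ∈ ℤ. Then θ̃ is f-admissible if and only if the composition θ̃ ∘ f (which also satisfies (θ̃∘f)_{p+n} = (θ̃∘f)_p + π) is dual f^∨-admissible. -/

import Mathlib

/-- A `(k,n)`-bounded affine permutation, as a bijection `f : ℤ ≃ ℤ` with
`f(j+n) = f(j)+n`, `Σ_{j=1}^{n} (f(j)−j) = kn`, and `j ≤ f(j) ≤ j+n`. -/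
def IsBoundedAffinePermutation (k n : ℕ) (f : ℤ ≃ ℤ) : Prop :=
  (∀ j : ℤ, f (j + n) = f j + n) ∧
  (∑ j ∈ Finset.Icc (1 : ℤ) (n : ℤ), (f j - j)) = (k : ℤ) * n ∧
  ∀ j : ℤ, j ≤ f j ∧ f j ≤ j + n

/-- The dual bounded affine permutation `f^∨(p) := f⁻¹(p) + n`. -/
def dualBAP (n : ℕ) (f : ℤ ≃ ℤ) : ℤ ≃ ℤ := f.symm.trans (Equiv.addRight (n : ℤ))

/-- `(p,q)` forms an affine `f`-crossing: with `s = f⁻¹(p)` and `t = f⁻¹(q)`,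
one has `s < t < p < q ≤ s + n`. -/
def AffineCrossing (n : ℕ) (f : ℤ ≃ ℤ) (p q : ℤ) : Prop :=
  f.symm p < f.symm q ∧ f.symm q < p ∧ p < q ∧ q ≤ f.symm p + n

/-- `θ̃` is `f`-admissible: `θ̃_p < θ̃_q < θ̃_{p+n}` whenever `(p,q)` forms an
affine `f`-crossing. -/
def FAdmissible (n : ℕ) (f : ℤ ≃ ℤ) (θ : ℤ → ℝ) : Prop :=
  ∀ p q : ℤ, AffineCrossing n f p q → θ p < θ q ∧ θ q < θ (p + n)

/-- `(p,q)` forms a dual affine `g`-crossing: with `s = g⁻¹(p)` and `t = g⁻¹(q)`,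
one has `s < t ≤ p < q < s + n`. -/
def DualAffineCrossing (n : ℕ) (g : ℤ ≃ ℤ) (p q : ℤ) : Prop :=
  g.symm p < g.symm q ∧ g.symm q ≤ p ∧ p < q ∧ q < g.symm p + n

/-- `θ̃` is dual `g`-admissible: `θ̃_p < θ̃_q < θ̃_{p+n}` whenever `(p,q)` forms a
dual affine `g`-crossing. -/
def DualAdmissible (n : ℕ) (g : ℤ ≃ ℤ) (θ : ℤ → ℝ) : Prop :=
  ∀ p q : ℤ, DualAffineCrossing n g p q → θ p < θ q ∧ θ q < θ (p + n)

/-!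
The periodicity `f (j + n) = f j + n` gives `(f^∨)⁻¹ p = f p - n`, after which
the substitution `(p, q) ↦ (f p, f q)` turns the dual `f^∨`-crossings exactly into the affine
`f`-crossings, and the two admissibility conditions become the same family of inequalities.
-/

section Periodic

variable {n : ℕ} {f : ℤ ≃ ℤ}

theorem dualBAP_symm_apply (hf : ∀ j : ℤ, f (j + n) = f j + n) (p : ℤ) :
    (dualBAP n f).symm p = f p - n := by
  have h := hf (p - n)
  simp only [sub_add_cancel] at h
  simp only [dualBAP, Equiv.symm_trans_apply, Equiv.addRight_symm, Equiv.symm_symm,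
    Equiv.coe_addRight, ← sub_eq_add_neg]
  linarith

theorem dualAffineCrossing_dualBAP_iff (hf : ∀ j : ℤ, f (j + n) = f j + n) (p q : ℤ) :
    DualAffineCrossing n (dualBAP n f) p q ↔ AffineCrossing n f (f p) (f q) := by
  simp only [DualAffineCrossing, AffineCrossing, dualBAP_symm_apply hf, Equiv.symm_apply_apply]
  constructor <;> rintro ⟨h₁, h₂, h₃, h₄⟩ <;> refine ⟨?_, ?_, ?_, ?_⟩ <;> linarith

theorem fAdmissible_iff_dualAdmissible_dualBAP (hf : ∀ j : ℤ, f (j + n) = f j + n)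
    (θ : ℤ → ℝ) : FAdmissible n f θ ↔ DualAdmissible n (dualBAP n f) (θ ∘ f) := by
  simp only [DualAdmissible, dualAffineCrossing_dualBAP_iff hf, Function.comp_apply, hf]
  rw [FAdmissible, ← f.forall_congr_right]
  exact forall_congr' fun _ => (f.forall_congr_right).symm

end Periodic

theorem admissible_iff_dual_admissible_general (k n : ℕ) (f : ℤ ≃ ℤ)
    (hf : IsBoundedAffinePermutation k n f)
    (θt : ℤ → ℝ) :
    FAdmissible n f θt ↔ DualAdmissible n (dualBAP n f) (fun p => θt (f p)) :=
  fAdmissible_iff_dualAdmissible_dualBAP hf.1 θt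

/-- Proposition 2.4(i): for a loopless bounded affine permutation `f` and a
sequence `θ̃` with `θ̃_{p+n} = θ̃_p + π`, the sequence `θ̃` is `f`-admissible if
and only if `θ̃ ∘ f` is dual `f^∨`-admissible. -/
theorem admissible_iff_dual_admissible (k n : ℕ) (f : ℤ ≃ ℤ)
    (hf : IsBoundedAffinePermutation k n f)
    (hloopless : ∀ j : ℤ, j < f j)
    (θt : ℤ → ℝ) (hper : ∀ p : ℤ, θt (p + n) = θt p + Real.pi) :
    FAdmissible n f θt ↔ DualAdmissible n (dualBAP n f) (fun p => θt (f p)) :=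
  admissible_iff_dual_admissible_general k n f hf θt
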